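/- arXiv:2407.04820 — 3 statements merged into one kernel-verified Lean document; each statement's English description precedes it below -/
import Mathlib

section
/- Let $(Z_n)_{n\ge 0}$ be a Galton–Watson branching process with $Z_0 = 1$, offspring mean $m = 1$ (critical case) and finite, nonzero offspring variance $\sigma^2$. Then $n \cdot \mathbb{P}(Z_n > 0) \to 2/\sigma^2$ as $n \to \infty$. -/
open MeasureTheory ProbabilityTheory Filter Topology Set

/-!
Let `G` be the generating function of the offspring law. Conditioning `Z (n + 1)` on `Z n`, which
is independent of the offspring numbers of generation `n`, gives `E[s ^ Z n] = G^[n] s`, so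
`u n := P(Z n > 0) = 1 - G^[n] 0`. Writing `G (1 - t) = 1 - t + t ^ 2 * R t`, where `R` is
continuous and positive on `[0, 1]` with `R 0 = σ² / 2`, the recursion
`u (n + 1) = u n - u n ^ 2 * R (u n)` forces `u n ↓ 0`, hence
`1 / u (n + 1) - 1 / u n → σ² / 2`, and by Cesàro `1 / (n * u n) → σ² / 2`.
-/

theorem tendsto_div_nat_of_tendsto_sub {a : ℕ → ℝ} {c : ℝ}
    (h : Tendsto (fun n => a (n + 1) - a n) atTop (𝓝 c)) :
    Tendsto (fun n : ℕ => a n / n) atTop (𝓝 c) := by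
  have htel (n : ℕ) : a n = a 0 + ∑ k ∈ Finset.range n, (a (k + 1) - a k) := by
    rw [Finset.sum_range_sub]; ring
  have := (tendsto_const_div_atTop_nhds_zero_nat (a 0)).add h.cesaro
  rw [zero_add] at this
  refine this.congr fun n => ?_
  rw [htel n]
  ring

theorem tendsto_nat_mul_of_eq_sub_sq_mul {u r : ℕ → ℝ} {c : ℝ} (hpos : ∀ n, 0 < u n)
    (hrec : ∀ n, u (n + 1) = u n - u n ^ 2 * r n) (hu : Tendsto u atTop (𝓝 0))
    (hr : Tendsto r atTop (𝓝 c)) (hc : 0 < c) :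
    Tendsto (fun n : ℕ => n * u n) atTop (𝓝 c⁻¹) := by
  have hfactor (n : ℕ) : u (n + 1) = u n * (1 - u n * r n) := by rw [hrec]; ring
  have hd (n : ℕ) : 0 < 1 - u n * r n := by
    have := hpos (n + 1)
    rw [hfactor] at this
    exact pos_of_mul_pos_right this (hpos n).le
  -- `1 / u (n + 1) - 1 / u n = r n / (1 - u n * r n)`
  have hdiff : Tendsto (fun n => (u (n + 1))⁻¹ - (u n)⁻¹) atTop (𝓝 c) := by
    have hlim : Tendsto (fun n => r n / (1 - u n * r n)) atTop (𝓝 (c / (1 - 0 * c))) :=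
      hr.div (tendsto_const_nhds.sub (hu.mul hr)) (by simp)
    rw [zero_mul, sub_zero, div_one] at hlim
    refine hlim.congr fun n => ?_
    have hu0 := (hpos n).ne'
    have hd0 := (hd n).ne'
    rw [hfactor, eq_sub_iff_add_eq, div_add' _ _ _ hd0, mul_inv, ← div_eq_mul_inv]
    congr 1
    field_simp
    ring
  refine ((tendsto_div_nat_of_tendsto_sub (a := fun n => (u n)⁻¹) hdiff).inv₀ hc.ne').congr
    fun n => ?_
  rw [inv_div, div_inv_eq_mul]

section Iterate

variable {G R : ℝ → ℝ}

theorem one_sub_iterate_mem_Ioc (hGR : ∀ t ∈ Icc (0 : ℝ) 1, G (1 - t) = 1 - t + t ^ 2 * R t)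
    (hG : ∀ s ∈ Ico (0 : ℝ) 1, G s < 1) (hR : ∀ t ∈ Icc (0 : ℝ) 1, 0 < R t) (n : ℕ) :
    1 - G^[n] 0 ∈ Ioc 0 1 := by
  induction n with
  | zero => simp
  | succ n ih =>
    have hmem : 1 - G^[n] 0 ∈ Icc 0 1 := Ioc_subset_Icc_self ih
    rw [Function.iterate_succ_apply']
    refine ⟨?_, ?_⟩
    · linarith [hG (G^[n] 0) ⟨by linarith [ih.2], by linarith [ih.1]⟩]
    · have := hGR _ hmem
      rw [sub_sub_cancel] at this
      linarith [ih.2, mul_nonneg (sq_nonneg (1 - G^[n] 0)) (hR _ hmem).le]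

theorem tendsto_nat_mul_one_sub_iterate
    (hGR : ∀ t ∈ Icc (0 : ℝ) 1, G (1 - t) = 1 - t + t ^ 2 * R t)
    (hG : ∀ s ∈ Ico (0 : ℝ) 1, G s < 1) (hRc : ContinuousOn R (Icc 0 1))
    (hR : ∀ t ∈ Icc (0 : ℝ) 1, 0 < R t) :
    Tendsto (fun n : ℕ => n * (1 - G^[n] 0)) atTop (𝓝 (R 0)⁻¹) := by
  set u : ℕ → ℝ := fun n => 1 - G^[n] 0
  have hmem (n : ℕ) : u n ∈ Icc 0 1 := Ioc_subset_Icc_self (one_sub_iterate_mem_Ioc hGR hG hR n)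
  have hrec (n : ℕ) : u (n + 1) = u n - u n ^ 2 * R (u n) := by
    have := hGR _ (hmem n)
    simp only [u, sub_sub_cancel] at this ⊢
    rw [Function.iterate_succ_apply', this]
    ring
  have hanti : Antitone u := antitone_nat_of_succ_le fun n => by
    rw [hrec]; nlinarith [hR _ (hmem n)]
  obtain ⟨L, hL⟩ : ∃ L, Tendsto u atTop (𝓝 L) :=
    ⟨_, tendsto_atTop_ciInf hanti ⟨0, by rintro _ ⟨n, rfl⟩; exact (hmem n).1⟩⟩
  have hLmem : L ∈ Icc 0 1 := isClosed_Icc.mem_of_tendsto hL (Eventually.of_forall hmem)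
  have hRu : Tendsto (fun n => R (u n)) atTop (𝓝 (R L)) :=
    (hRc L hLmem).tendsto.comp (tendsto_nhdsWithin_iff.2 ⟨hL, Eventually.of_forall hmem⟩)
  have hfix : L = L - L ^ 2 * R L :=
    tendsto_nhds_unique ((hL.comp (tendsto_add_atTop_nat 1)).congr fun n => (hrec n).symm ▸ rfl)
      (hL.sub ((hL.pow 2).mul hRu))
  have hL0 : L = 0 := by
    have : L ^ 2 * R L = 0 := by linarith
    simpa [(hR L hLmem).ne'] using this
  subst hL0
  exact tendsto_nat_mul_of_eq_sub_sq_mul (fun n => (one_sub_iterate_mem_Ioc hGR hG hR n).1) hrec hL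
    (by simpa [u] using hRu) (hR 0 ⟨le_rfl, zero_le_one⟩)

end Iterate

noncomputable def oneSubPowRemainder (m : ℕ) (t : ℝ) : ℝ :=
  ∑ i ∈ Finset.range m, ∑ j ∈ Finset.range i, (1 - t) ^ j

namespace oneSubPowRemainder

theorem continuous (m : ℕ) : Continuous (oneSubPowRemainder m) := by
  unfold oneSubPowRemainder
  fun_prop

theorem one_sub_pow_eq (m : ℕ) (t : ℝ) :
    (1 - t) ^ m = 1 - m * t + t ^ 2 * oneSubPowRemainder m t := by
  induction m with
  | zero => simp [oneSubPowRemainder]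
  | succ n ih =>
    have hgeom : t * ∑ j ∈ Finset.range n, (1 - t) ^ j = 1 - (1 - t) ^ n := by
      have := geom_sum_mul (1 - t) n
      linear_combination -this
    simp only [oneSubPowRemainder, Finset.sum_range_succ] at ih ⊢
    rw [pow_succ, ih] at *
    push_cast
    linear_combination (-t) * hgeom

theorem apply_zero (m : ℕ) : oneSubPowRemainder m 0 = ((m : ℝ) ^ 2 - m) / 2 := by
  induction m with
  | zero => simp [oneSubPowRemainder]
  | succ n ih =>
    simp only [oneSubPowRemainder, Finset.sum_range_succ, sub_zero, one_pow,
      Finset.sum_const, Finset.card_range, nsmul_eq_mul, mul_one] at ih ⊢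
    rw [ih]; push_cast; ring

theorem nonneg {m : ℕ} {t : ℝ} (ht : t ≤ 1) : 0 ≤ oneSubPowRemainder m t :=
  Finset.sum_nonneg fun _ _ => Finset.sum_nonneg fun _ _ => pow_nonneg (by linarith) _

theorem le_apply_zero {m : ℕ} {t : ℝ} (h0 : 0 ≤ t) (h1 : t ≤ 1) :
    oneSubPowRemainder m t ≤ oneSubPowRemainder m 0 :=
  Finset.sum_le_sum fun _ _ => Finset.sum_le_sum fun _ _ => by
    rw [sub_zero, one_pow]; exact pow_le_one₀ (by linarith) (by linarith)

theorem eq_zero_iff {m : ℕ} {t : ℝ} (ht : t ≤ 1) : oneSubPowRemainder m t = 0 ↔ m ≤ 1 := by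
  constructor
  · intro h
    by_contra! hm
    have hle : ∑ j ∈ Finset.range 1, (1 - t) ^ j ≤ oneSubPowRemainder m t :=
      Finset.single_le_sum (f := fun i => ∑ j ∈ Finset.range i, (1 - t) ^ j)
        (fun i _ => Finset.sum_nonneg fun j _ => pow_nonneg (by linarith) j)
        (Finset.mem_range.2 hm)
    norm_num [h] at hle
  · intro hm
    interval_cases m <;> simp [oneSubPowRemainder]

end oneSubPowRemainder

theorem integral_pos_iff_of_support_eq {Ω : Type*} [MeasurableSpace Ω] {μ : Measure Ω}
    {f g : Ω → ℝ} (hf : 0 ≤ f) (hg : 0 ≤ g) (hfi : Integrable f μ) (hgi : Integrable g μ)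
    (h : Function.support f = Function.support g) : 0 < ∫ ω, f ω ∂μ ↔ 0 < ∫ ω, g ω ∂μ := by
  rw [integral_pos_iff_support_of_nonneg hf hfi, integral_pos_iff_support_of_nonneg hg hgi, h]

section GeneratingFunction

variable {Ω : Type*} [MeasurableSpace Ω] {μ : Measure Ω} {X : Ω → ℕ}

noncomputable def pgf (μ : Measure Ω) (X : Ω → ℕ) (s : ℝ) : ℝ := ∫ ω, s ^ X ω ∂μ

noncomputable def pgfRemainder (μ : Measure Ω) (X : Ω → ℕ) (t : ℝ) : ℝ :=
  ∫ ω, oneSubPowRemainder (X ω) t ∂μ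

theorem pgf_mem_Icc [IsProbabilityMeasure μ] {s : ℝ} (hs : s ∈ Icc 0 1) :
    pgf μ X s ∈ Icc 0 1 := by
  refine ⟨integral_nonneg fun ω => pow_nonneg hs.1 _, ?_⟩
  have := norm_integral_le_of_norm_le_const (μ := μ) (f := fun ω => s ^ X ω) (C := 1)
    (Eventually.of_forall fun ω => by
      rw [Real.norm_of_nonneg (pow_nonneg hs.1 _)]; exact pow_le_one₀ hs.1 hs.2)
  simpa [pgf] using (le_abs_self _).trans this

theorem integrable_pow_of_mem_Icc [IsFiniteMeasure μ] (hX : Measurable X) {s : ℝ}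
    (hs : s ∈ Icc 0 1) : Integrable (fun ω => s ^ X ω) μ :=
  (integrable_const 1).mono' (measurable_from_top.comp hX).aestronglyMeasurable
    (Eventually.of_forall fun ω => by
      rw [Real.norm_of_nonneg (pow_nonneg hs.1 _)]; exact pow_le_one₀ hs.1 hs.2)

theorem pgf_lt_one [IsProbabilityMeasure μ] (hX : Measurable X)
    (hmean : 0 < ∫ ω, (X ω : ℝ) ∂μ) {s : ℝ} (hs : s ∈ Ico 0 1) : pgf μ X s < 1 := by
  have hsupp :
      Function.support (fun ω => 1 - s ^ X ω) = Function.support (fun ω => (X ω : ℝ)) := by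
    ext ω
    rcases Nat.eq_zero_or_pos (X ω) with h | h
    · simp [h]
    · simp [h.ne', sub_eq_zero, (pow_lt_one₀ hs.1 hs.2 h.ne').ne']
  have hint := integrable_pow_of_mem_Icc (μ := μ) hX (Ico_subset_Icc_self hs)
  have := (integral_pos_iff_of_support_eq
    (fun ω => sub_nonneg.2 (pow_le_one₀ hs.1 hs.2.le)) (fun ω => Nat.cast_nonneg _)
    ((integrable_const 1).sub hint) (Integrable.of_integral_ne_zero hmean.ne') hsupp).2 hmean
  rw [integral_sub (integrable_const 1) hint] at this
  simp only [integral_const, probReal_univ, smul_eq_mul, mul_one] at this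
  rw [pgf]; linarith

theorem integrable_oneSubPowRemainder_zero [IsFiniteMeasure μ]
    (hX2 : MemLp (fun ω => (X ω : ℝ)) 2 μ) :
    Integrable (fun ω => oneSubPowRemainder (X ω) 0) μ := by
  simp only [oneSubPowRemainder.apply_zero]
  exact (hX2.integrable_sq.sub (hX2.integrable one_le_two)).div_const 2

theorem integrable_oneSubPowRemainder [IsFiniteMeasure μ] (hX : Measurable X)
    (hX2 : MemLp (fun ω => (X ω : ℝ)) 2 μ) {t : ℝ} (ht : t ∈ Icc 0 1) :
    Integrable (fun ω => oneSubPowRemainder (X ω) t) μ :=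
  (integrable_oneSubPowRemainder_zero hX2).mono'
    ((measurable_from_top (f := fun m => oneSubPowRemainder m t)).comp hX).aestronglyMeasurable
    (Eventually.of_forall fun ω => by
      rw [Real.norm_of_nonneg (oneSubPowRemainder.nonneg ht.2)]
      exact oneSubPowRemainder.le_apply_zero ht.1 ht.2)

theorem pgf_one_sub_eq [IsProbabilityMeasure μ] (hX : Measurable X)
    (hX2 : MemLp (fun ω => (X ω : ℝ)) 2 μ) {t : ℝ} (ht : t ∈ Icc 0 1) :
    pgf μ X (1 - t) = 1 - (∫ ω, (X ω : ℝ) ∂μ) * t + t ^ 2 * pgfRemainder μ X t := by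
  have hint : Integrable (fun ω => (X ω : ℝ) * t) μ := (hX2.integrable one_le_two).mul_const t
  have hlin : Integrable (fun ω => 1 - (X ω : ℝ) * t) μ := (integrable_const 1).sub hint
  have hQ := (integrable_oneSubPowRemainder hX hX2 ht).const_mul (t ^ 2)
  simp only [pgf, pgfRemainder, oneSubPowRemainder.one_sub_pow_eq]
  rw [integral_add hlin hQ, integral_sub (integrable_const 1) hint, integral_mul_const,
    integral_const_mul]
  simp

theorem continuousOn_pgfRemainder [IsFiniteMeasure μ] (hX : Measurable X)
    (hX2 : MemLp (fun ω => (X ω : ℝ)) 2 μ) : ContinuousOn (pgfRemainder μ X) (Icc 0 1) :=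
  continuousOn_of_dominated (fun t ht => (integrable_oneSubPowRemainder hX hX2 ht).1)
    (fun t ht => Eventually.of_forall fun ω => by
      rw [Real.norm_of_nonneg (oneSubPowRemainder.nonneg ht.2)]
      exact oneSubPowRemainder.le_apply_zero ht.1 ht.2)
    (integrable_oneSubPowRemainder_zero hX2)
    (Eventually.of_forall fun ω => (oneSubPowRemainder.continuous _).continuousOn)

theorem pgfRemainder_zero [IsProbabilityMeasure μ] (hX2 : MemLp (fun ω => (X ω : ℝ)) 2 μ) :
    pgfRemainder μ X 0 =
      (variance (fun ω => (X ω : ℝ)) μ + (∫ ω, (X ω : ℝ) ∂μ) ^ 2 - ∫ ω, (X ω : ℝ) ∂μ) / 2 := by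
  simp only [pgfRemainder, oneSubPowRemainder.apply_zero]
  rw [integral_div, integral_sub hX2.integrable_sq (hX2.integrable one_le_two),
    variance_eq_sub hX2]
  simp only [Pi.pow_apply]
  ring

theorem pgfRemainder_pos [IsFiniteMeasure μ] (hX : Measurable X)
    (hX2 : MemLp (fun ω => (X ω : ℝ)) 2 μ) (h0 : 0 < pgfRemainder μ X 0) {t : ℝ}
    (ht : t ∈ Icc 0 1) : 0 < pgfRemainder μ X t := by
  have hsupp (t : ℝ) (ht : t ≤ 1) :
      Function.support (fun ω => oneSubPowRemainder (X ω) t) = {ω | 2 ≤ X ω} := by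
    ext ω
    simp [oneSubPowRemainder.eq_zero_iff ht, Nat.lt_iff_add_one_le]
  exact (integral_pos_iff_of_support_eq (fun _ => oneSubPowRemainder.nonneg zero_le_one)
    (fun _ => oneSubPowRemainder.nonneg ht.2) (integrable_oneSubPowRemainder_zero hX2)
    (integrable_oneSubPowRemainder hX hX2 ht)
    ((hsupp 0 zero_le_one).trans (hsupp t ht.2).symm)).1 h0

end GeneratingFunction

section RandomIndex

variable {Ω ι : Type*} {mΩ : MeasurableSpace Ω} [MeasurableSpace ι] [Countable ι]
  [MeasurableSingletonClass ι] {N : Ω → ι}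

theorem measurable_eval_of_countable {β : Type*} [MeasurableSpace β] {Y : ι → Ω → β}
    (hN : Measurable N) (hY : ∀ i, Measurable (Y i)) : Measurable fun ω => Y (N ω) ω :=
  (measurable_from_prod_countable_left (f := fun p : Ω × ι => Y p.2 p.1) hY).comp
    (measurable_id.prodMk hN)

theorem integral_eq_tsum_setIntegral_fiber {μ : Measure Ω} (hN : Measurable N) {f : Ω → ℝ}
    (hf : Integrable f μ) : ∫ ω, f ω ∂μ = ∑' i, ∫ ω in N ⁻¹' {i}, f ω ∂μ := by
  have hU : (⋃ i, N ⁻¹' {i}) = univ := by ext ω; simp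
  rw [← integral_iUnion (fun i => hN (measurableSet_singleton i))
    (fun i j hij => (disjoint_singleton.2 hij).preimage N) hf.integrableOn, hU, setIntegral_univ]

theorem integral_eval_of_indepFun {μ : Measure Ω} [IsFiniteMeasure μ] {Y : ι → Ω → ℝ} {C : ℝ}
    (hN : Measurable N) (hY : ∀ i, Measurable (Y i)) (hind : ∀ i, IndepFun N (Y i) μ)
    (hbdd : ∀ i ω, ‖Y i ω‖ ≤ C) :
    ∫ ω, Y (N ω) ω ∂μ = ∫ ω, (∫ ω', Y (N ω) ω' ∂μ) ∂μ := by
  have hint {Y' : ι → Ω → ℝ} {C' : ℝ} (hY' : ∀ i, Measurable (Y' i))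
      (hbdd' : ∀ i ω, ‖Y' i ω‖ ≤ C') : Integrable (fun ω => Y' (N ω) ω) μ :=
    (integrable_const C').mono' (measurable_eval_of_countable hN hY').aestronglyMeasurable
      (Eventually.of_forall fun ω => hbdd' _ ω)
  have hmean_bdd (i : ι) : ‖∫ ω', Y i ω' ∂μ‖ ≤ C * μ.real univ :=
    norm_integral_le_of_norm_le_const (Eventually.of_forall (hbdd i))
  have hfiber (f : ι → Ω → ℝ) (i : ι) :
      ∫ ω in N ⁻¹' {i}, f (N ω) ω ∂μ = ∫ ω in N ⁻¹' {i}, f i ω ∂μ :=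
    setIntegral_congr_fun (hN (measurableSet_singleton i)) fun ω (hω : N ω = i) => by rw [hω]
  rw [integral_eq_tsum_setIntegral_fiber hN (hint hY hbdd),
    integral_eq_tsum_setIntegral_fiber hN
      (hint (Y' := fun i _ => ∫ ω', Y i ω' ∂μ) (fun _ => measurable_const) fun i _ => hmean_bdd i)]
  refine tsum_congr fun i => ?_
  have hfib : MeasurableSet[MeasurableSpace.comap N inferInstance] (N ⁻¹' {i}) :=
    ⟨{i}, measurableSet_singleton i, rfl⟩
  calc ∫ ω in N ⁻¹' {i}, Y (N ω) ω ∂μ = ∫ ω in N ⁻¹' {i}, Y i ω ∂μ := hfiber Y i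
    _ = μ.real (N ⁻¹' {i}) • ∫ ω, Y i ω ∂μ :=
      Indep.setIntegral_eq_smul (f := id) hN.comap_le (hind i) (hY i).aemeasurable hfib
        aestronglyMeasurable_id
    _ = ∫ ω in N ⁻¹' {i}, (fun _ => ∫ ω', Y i ω' ∂μ) ω ∂μ := (setIntegral_const _).symm
    _ = ∫ ω in N ⁻¹' {i}, ∫ ω', Y (N ω) ω' ∂μ ∂μ :=
      (hfiber (fun j _ => ∫ ω', Y j ω' ∂μ) i).symm

theorem ProbabilityTheory.iIndepFun.integral_finset_prod {ι' : Type*} {μ : Measure Ω}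
    {Y : ι' → Ω → ℝ} (hY : iIndepFun Y μ) (hm : ∀ i, AEStronglyMeasurable (Y i) μ)
    (S : Finset ι') : ∫ ω, ∏ i ∈ S, Y i ω ∂μ = ∏ i ∈ S, ∫ ω, Y i ω ∂μ := by
  have := (hY.precomp (g := ((↑) : S → ι')) Subtype.val_injective)
    |>.integral_fun_prod_eq_prod_integral fun i => hm i
  convert this using 1
  · exact congrArg (integral μ) (funext fun ω => (Finset.prod_coe_sort S fun i => Y i ω).symm)
  · exact (Finset.prod_coe_sort S _).symm

end RandomIndex

section GaltonWatson

variable {Ω : Type*} {mΩ : MeasurableSpace Ω} {μ : Measure Ω} (M : ℕ × ℕ → Ω → ℕ)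
  {Z : ℕ → Ω → ℕ}

abbrev generationsBefore (n : ℕ) : MeasurableSpace Ω :=
  ⨆ p ∈ {q : ℕ × ℕ | q.1 < n}, MeasurableSpace.comap (M p) inferInstance

variable {M}

theorem generationsBefore_le (hmeas : ∀ p, Measurable (M p)) (n : ℕ) :
    generationsBefore M n ≤ mΩ :=
  iSup₂_le fun p _ => (hmeas p).comap_le

theorem measurable_generationsBefore (hZ0 : ∀ ω, Z 0 ω = 1)
    (hZrec : ∀ n ω, Z (n + 1) ω = ∑ i ∈ Finset.range (Z n ω), M (n, i) ω) (n : ℕ) :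
    Measurable[generationsBefore M n] (Z n) := by
  induction n with
  | zero => simp only [funext hZ0, measurable_const]
  | succ n ih =>
    have hmono : generationsBefore M n ≤ generationsBefore M (n + 1) :=
      biSup_mono fun p (hp : p.1 < n) => Nat.lt_succ_of_lt hp
    have hM (i : ℕ) : Measurable[generationsBefore M (n + 1)] (M (n, i)) :=
      measurable_iff_comap_le.2 <| le_biSup (fun p => MeasurableSpace.comap (M p) inferInstance)
        (show (n, i).1 < n + 1 from Nat.lt_succ_self n)
    rw [funext (hZrec n)]
    exact measurable_eval_of_countable (Y := fun c ω => ∑ i ∈ Finset.range c, M (n, i) ω)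
      (ih.mono hmono le_rfl) fun c => Finset.measurable_sum _ fun i _ => hM i

theorem indepFun_generation_prod (hmeas : ∀ p, Measurable (M p)) (hindep : iIndepFun M μ)
    (hZ0 : ∀ ω, Z 0 ω = 1)
    (hZrec : ∀ n ω, Z (n + 1) ω = ∑ i ∈ Finset.range (Z n ω), M (n, i) ω)
    (n z : ℕ) (f : ℕ → ℝ) :
    IndepFun (Z n) (fun ω => ∏ i ∈ Finset.range z, f (M (n, i) ω)) μ := by
  have hdisj : Disjoint {q : ℕ × ℕ | q.1 < n} {q | q.1 = n} :=
    disjoint_left.2 fun q (hq : q.1 < n) (hq' : q.1 = n) => hq.ne hq'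
  have hind := indep_iSup_of_disjoint (fun p => (hmeas p).comap_le) hindep hdisj
  have hprod : Measurable[⨆ p ∈ {q : ℕ × ℕ | q.1 = n}, MeasurableSpace.comap (M p) inferInstance]
      (fun ω => ∏ i ∈ Finset.range z, f (M (n, i) ω)) :=
    Finset.measurable_prod _ fun i _ => measurable_from_top.comp <| measurable_iff_comap_le.2 <|
      le_biSup (fun p => MeasurableSpace.comap (M p) inferInstance) (show (n, i).1 = n from rfl)
  exact indep_of_indep_of_le_left (indep_of_indep_of_le_right hind
    (measurable_iff_comap_le.1 hprod))
    (measurable_iff_comap_le.1 (measurable_generationsBefore hZ0 hZrec n))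

theorem integral_prod_generation (hmeas : ∀ p, Measurable (M p)) (hindep : iIndepFun M μ)
    (hident : ∀ p, IdentDistrib (M p) (M (0, 0)) μ μ) (n z : ℕ) (f : ℕ → ℝ) :
    ∫ ω, ∏ i ∈ Finset.range z, f (M (n, i) ω) ∂μ = (∫ ω, f (M (0, 0) ω) ∂μ) ^ z := by
  have hind : iIndepFun (fun p ω => f (M p ω)) μ :=
    hindep.comp (fun _ => f) fun _ => measurable_from_top
  have := hind.integral_finset_prod
    (fun p => (measurable_from_top.comp (hmeas p)).aestronglyMeasurable)
    ((Finset.range z).map ⟨fun i => (n, i), fun i j h => (Prod.ext_iff.1 h).2⟩)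
  simp only [Finset.prod_map] at this
  refine this.trans <| (Finset.prod_congr rfl fun i _ =>
    ((hident (n, i)).comp (u := f) measurable_from_top).integral_eq).trans ?_
  simp

theorem integral_pow_succ_eq_integral_pgf_pow [IsProbabilityMeasure μ]
    (hmeas : ∀ p, Measurable (M p)) (hindep : iIndepFun M μ)
    (hident : ∀ p, IdentDistrib (M p) (M (0, 0)) μ μ)
    (hZ0 : ∀ ω, Z 0 ω = 1) (hZrec : ∀ n ω, Z (n + 1) ω = ∑ i ∈ Finset.range (Z n ω), M (n, i) ω)
    (n : ℕ) {s : ℝ} (hs : s ∈ Icc 0 1) :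
    ∫ ω, s ^ Z (n + 1) ω ∂μ = ∫ ω, pgf μ (M (0, 0)) s ^ Z n ω ∂μ := by
  have hY (z : ℕ) : Measurable fun ω => ∏ i ∈ Finset.range z, s ^ M (n, i) ω :=
    Finset.measurable_prod _ fun i _ => measurable_from_top.comp (hmeas _)
  have hbdd (z : ℕ) (ω : Ω) : ‖∏ i ∈ Finset.range z, s ^ M (n, i) ω‖ ≤ 1 := by
    rw [Real.norm_of_nonneg (Finset.prod_nonneg fun i _ => pow_nonneg hs.1 _)]
    exact Finset.prod_le_one (fun i _ => pow_nonneg hs.1 _) fun i _ => pow_le_one₀ hs.1 hs.2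
  calc ∫ ω, s ^ Z (n + 1) ω ∂μ = ∫ ω, ∏ i ∈ Finset.range (Z n ω), s ^ M (n, i) ω ∂μ := by
        simp_rw [hZrec, Finset.prod_pow_eq_pow_sum]
    _ = ∫ ω, (∫ ω', ∏ i ∈ Finset.range (Z n ω), s ^ M (n, i) ω' ∂μ) ∂μ :=
        integral_eval_of_indepFun ((measurable_generationsBefore hZ0 hZrec n).mono
          (generationsBefore_le hmeas n) le_rfl) hY
          (fun z => indepFun_generation_prod hmeas hindep hZ0 hZrec n z _) hbdd
    _ = ∫ ω, pgf μ (M (0, 0)) s ^ Z n ω ∂μ := by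
        simp_rw [integral_prod_generation hmeas hindep hident n _ (fun m => s ^ m), pgf]

theorem integral_pow_eq_iterate [IsProbabilityMeasure μ] (hmeas : ∀ p, Measurable (M p))
    (hindep : iIndepFun M μ) (hident : ∀ p, IdentDistrib (M p) (M (0, 0)) μ μ)
    (hZ0 : ∀ ω, Z 0 ω = 1) (hZrec : ∀ n ω, Z (n + 1) ω = ∑ i ∈ Finset.range (Z n ω), M (n, i) ω)
    (n : ℕ) {s : ℝ} (hs : s ∈ Icc 0 1) :
    ∫ ω, s ^ Z n ω ∂μ = (pgf μ (M (0, 0)))^[n] s := by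
  induction n generalizing s with
  | zero => simp [hZ0]
  | succ n ih =>
    rw [integral_pow_succ_eq_integral_pgf_pow hmeas hindep hident hZ0 hZrec n hs,
      ih (pgf_mem_Icc hs), Function.iterate_succ_apply]

theorem measureReal_pos_eq_one_sub_iterate [IsProbabilityMeasure μ] (hmeas : ∀ p, Measurable (M p))
    (hindep : iIndepFun M μ) (hident : ∀ p, IdentDistrib (M p) (M (0, 0)) μ μ)
    (hZ0 : ∀ ω, Z 0 ω = 1) (hZrec : ∀ n ω, Z (n + 1) ω = ∑ i ∈ Finset.range (Z n ω), M (n, i) ω)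
    (n : ℕ) : μ.real {ω | 0 < Z n ω} = 1 - (pgf μ (M (0, 0)))^[n] 0 := by
  have hZ : Measurable (Z n) :=
    (measurable_generationsBefore hZ0 hZrec n).mono (generationsBefore_le hmeas n) le_rfl
  have hint := integrable_pow_of_mem_Icc (μ := μ) hZ (s := 0) ⟨le_rfl, zero_le_one⟩
  -- `0 ^ k` is the indicator of `k = 0`
  have hind : {ω | 0 < Z n ω}.indicator 1 = fun ω => 1 - (0 : ℝ) ^ Z n ω := by
    ext ω
    rcases Nat.eq_zero_or_pos (Z n ω) with h | h
    · simp [h]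
    · simp [h, h.ne']
  rw [← integral_pow_eq_iterate hmeas hindep hident hZ0 hZrec n ⟨le_rfl, zero_le_one⟩,
    ← integral_indicator_one (measurableSet_lt measurable_const hZ), hind,
    integral_sub (integrable_const 1) hint]
  simp

end GaltonWatson

/-- Kolmogorov's asymptotic for the survival probability of a critical
Galton–Watson process: `n * P(Z_n > 0) → 2 / σ²`. -/
theorem kolmogorov_survival_asymptotic
    {Ω : Type*} [MeasureSpace Ω] [IsProbabilityMeasure (ℙ : Measure Ω)]
    (M : ℕ × ℕ → Ω → ℕ)
    (hmeas : ∀ p, Measurable (M p))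
    (hindep : iIndepFun M ℙ)
    (hident : ∀ p, IdentDistrib (M p) (M (0, 0)) ℙ ℙ)
    (hmean : ∫ ω, (M (0, 0) ω : ℝ) ∂ℙ = 1)
    (σ2 : ℝ) (hσ2pos : 0 < σ2)
    (hvar : variance (fun ω => (M (0, 0) ω : ℝ)) ℙ = σ2)
    (Z : ℕ → Ω → ℕ)
    (hZ0 : ∀ ω, Z 0 ω = 1)
    (hZrec : ∀ n ω, Z (n + 1) ω = ∑ i ∈ Finset.range (Z n ω), M (n, i) ω) :
    Tendsto (fun n : ℕ => (n : ℝ) * (ℙ {ω | 0 < Z n ω}).toReal)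
      atTop (nhds (2 / σ2)) := by
  have hX2 : MemLp (fun ω => (M (0, 0) ω : ℝ)) 2 ℙ := by
    by_contra h
    have : variance (fun ω => (M (0, 0) ω : ℝ)) ℙ = 0 :=
      variance_of_not_memLp (measurable_from_top.comp (hmeas _)).aestronglyMeasurable h
    linarith
  have hR0 : pgfRemainder ℙ (M (0, 0)) 0 = σ2 / 2 := by
    rw [pgfRemainder_zero hX2, hvar, hmean]; ring
  have hlim := tendsto_nat_mul_one_sub_iterate
    (fun t ht => by rw [pgf_one_sub_eq (hmeas _) hX2 ht, hmean, one_mul])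
    (fun s hs => pgf_lt_one (hmeas _) (hmean ▸ one_pos) hs)
    (continuousOn_pgfRemainder (hmeas _) hX2)
    (fun t ht => pgfRemainder_pos (hmeas _) hX2 (by rw [hR0]; positivity) ht)
  rw [hR0, inv_div] at hlim
  refine hlim.congr fun n => ?_
  rw [← measureReal_def, measureReal_pos_eq_one_sub_iterate hmeas hindep hident hZ0 hZrec n]
end

section
/- Let $\bar c > 1$, $\Sigma_t > 0$, and set $R_0 = \arctan(1/\sqrt{\bar c - 1})/(\Sigma_t\sqrt{\bar c - 1})$ and $\alpha = \Sigma_t\sqrt{\bar c - 1}$. Then $2\cos(2R_0\alpha) = (\alpha/\Sigma_t - \Sigma_t/\alpha)\sin(2R_0\alpha)$. -/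
open Real

/-! With `θ = arctan (1 / √(c̄ - 1))` one has `2 R₀ α = 2θ` and `α / Σt - Σt / α = cot θ - tan θ`,
so the dispersion relation is the double-angle identity `(cot θ - tan θ) sin 2θ = 2 cos 2θ`. -/

theorem Real.inv_tan_sub_tan_mul_sin_two_mul {θ : ℝ} (hcos : cos θ ≠ 0) (htan : tan θ ≠ 0) :
    ((tan θ)⁻¹ - tan θ) * sin (2 * θ) = 2 * cos (2 * θ) := by
  have hsin : sin θ ≠ 0 := fun h => htan (by rw [tan_eq_sin_div_cos, h, zero_div])
  rw [tan_eq_sin_div_cos, sin_two_mul, cos_two_mul']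
  field_simp

/-- The rod half-length `R₀ = arctan (1 / √(c̄ - 1)) / (St √(c̄ - 1))` satisfies
the dispersion relation `2 cos (2 R₀ α) = (α / St - St / α) sin (2 R₀ α)`
with `α = St √(c̄ - 1)`. -/
theorem rod_dispersion_relation (c St : ℝ) (hc : 1 < c) (hSt : 0 < St)
    (R0 α : ℝ)
    (hR0 : R0 = arctan (1 / Real.sqrt (c - 1)) / (St * Real.sqrt (c - 1)))
    (hα : α = St * Real.sqrt (c - 1)) :
    2 * cos (2 * R0 * α) = (α / St - St / α) * sin (2 * R0 * α) := by
  set s := Real.sqrt (c - 1)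
  set θ := arctan (1 / s)
  have hs : 0 < s := Real.sqrt_pos.2 (by linarith)
  have hangle : 2 * R0 * α = 2 * θ := by
    rw [hR0, hα]
    field_simp
  have hcoeff : α / St - St / α = (tan θ)⁻¹ - tan θ := by
    rw [tan_arctan, hα]
    field_simp
  have htan : tan θ ≠ 0 := by
    rw [tan_arctan]
    positivity
  rw [hangle, hcoeff, inv_tan_sub_tan_mul_sin_two_mul (cos_arctan_pos _).ne' htan]
end

section
/- Let $\alpha, R > 0$ with $\sin(\alpha R)\ne 0$ and $\tan(\alpha R)$ defined and nonzero. With $\varphi_0(x,\Omega) = \frac{\alpha}{4\nu_f\Sigma_f\sin(\alpha R)}(\cos(\alpha x) + \Omega\sin(\alpha x)/\tan(\alpha R))$, $\varphi_0^\dagger(x,\Omega) = \frac{8\sin(\alpha R)}{4R\alpha + 2\sin(2\alpha R)}(\cos(\alpha x) - \Omega\sin(\alpha x)/\tan(\alpha R))$, $\nu_f = 2$, and $\mathcal{V}[g](x,\Omega) = \frac12(g(x,+1)+g(x,-1))^2$, one has $\langle \varphi_0, \mathcal{V}[\varphi_0^\dagger]\rangle = \frac{16(5 + \cos(2\alpha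 R))\sin^2(\alpha R)}{6\Sigma_f(2\alpha R + \sin(2\alpha R))^2}$, where $\langle f,g\rangle = \sum_{\Omega=\pm1}\int_{-R}^R f\,g\,dx$. -/
open Real MeasureTheory

/-!
The variance term `V` does not depend on the direction `Ω`, while the parts of `φ₀` odd in `Ω`
cancel in the sum over `Ω = ±1`. Writing `φ₀ = A (cos (α x) + Ω ⋯)` and
`φ₀† = C (cos (α x) - Ω ⋯)`, the integrand summed over `Ω` is `4 A C² cos³ (α x)`, whose integral
over `(-R, R)` is `(2 / α) (sin (α R) - sin³ (α R) / 3)`; with `cos (2 α R) = 1 - 2 sin² (α R)`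
this is the closed form.
-/

theorem integral_cos_mul_pow_three {α : ℝ} (hα : α ≠ 0) (a b : ℝ) :
    ∫ x in a..b, cos (α * x) ^ 3
      = α⁻¹ * (sin (α * b) - sin (α * a) - (sin (α * b) ^ 3 - sin (α * a) ^ 3) / 3) := by
  rw [intervalIntegral.integral_comp_mul_left (fun x => cos x ^ 3) hα, integral_cos_pow_three,
    smul_eq_mul]

theorem rod_variance_inner_product_general (α R nf Sf : ℝ)
    (hα : 0 < α) (hnf : nf = 2)
    (hsin : sin (α * R) ≠ 0)
    (φ0 φd V : ℝ → ℝ → ℝ)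
    (hφ0 : ∀ x Ω, φ0 x Ω = α / (4 * nf * Sf * sin (α * R))
        * (cos (α * x) + Ω * sin (α * x) / tan (α * R)))
    (hφd : ∀ x Ω, φd x Ω = 8 * sin (α * R) / (4 * R * α + 2 * sin (2 * α * R))
        * (cos (α * x) - Ω * sin (α * x) / tan (α * R)))
    (hV : ∀ x Ω, V x Ω = (1 / 2) * (φd x 1 + φd x (-1)) ^ 2) :
    ∑ Ω ∈ ({-1, 1} : Finset ℝ), ∫ x in (-R)..R, φ0 x Ω * V x Ω
      = 16 * (5 + cos (2 * α * R)) * sin (α * R) ^ 2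
          / (6 * Sf * (2 * α * R + sin (2 * α * R)) ^ 2) := by
  set A := α / (4 * nf * Sf * sin (α * R))
  set C := 8 * sin (α * R) / (4 * R * α + 2 * sin (2 * α * R))
  have hintegrable (Ω : ℝ) : IntervalIntegrable (fun x => φ0 x Ω * V x Ω) volume (-R) R := by
    refine Continuous.intervalIntegrable ?_ _ _
    simp only [hV, hφd, hφ0]
    fun_prop
  have hangular_sum (x : ℝ) :
      φ0 x (-1) * V x (-1) + φ0 x 1 * V x 1 = 4 * A * C ^ 2 * cos (α * x) ^ 3 := by
    simp only [hV, hφd, hφ0]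
    ring
  rw [Finset.sum_pair (by norm_num),
    ← intervalIntegral.integral_add (hintegrable _) (hintegrable _),
    intervalIntegral.integral_congr fun x _ => hangular_sum x, intervalIntegral.integral_const_mul,
    integral_cos_mul_pow_three hα.ne', mul_neg, sin_neg]
  simp only [A, C, hnf]
  rw [show 4 * R * α + 2 * sin (2 * α * R) = 2 * (2 * α * R + sin (2 * α * R)) by ring,
    mul_assoc 2 α R, cos_two_mul_eq_one_sub]
  field_simp
  ring

/-- Explicit evaluation of the variance inner product
`⟨φ₀, 𝒱[φ₀†]⟩ = 16 (5 + cos (2 α R)) sin² (α R) / (6 Sf (2 α R + sin (2 α R))²)`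
for the critical rod model with `ν_f = 2`. -/
theorem rod_variance_inner_product (α R nf Sf : ℝ)
    (hα : 0 < α) (hR : 0 < R) (hSf : 0 < Sf) (hnf : nf = 2)
    (hsin : sin (α * R) ≠ 0) (hcos : cos (α * R) ≠ 0)
    (htan : tan (α * R) ≠ 0)
    (φ0 φd V : ℝ → ℝ → ℝ)
    (hφ0 : ∀ x Ω, φ0 x Ω = α / (4 * nf * Sf * sin (α * R))
        * (cos (α * x) + Ω * sin (α * x) / tan (α * R)))
    (hφd : ∀ x Ω, φd x Ω = 8 * sin (α * R) / (4 * R * α + 2 * sin (2 * α * R))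
        * (cos (α * x) - Ω * sin (α * x) / tan (α * R)))
    (hV : ∀ x Ω, V x Ω = (1 / 2) * (φd x 1 + φd x (-1)) ^ 2) :
    ∑ Ω ∈ ({-1, 1} : Finset ℝ), ∫ x in (-R)..R, φ0 x Ω * V x Ω
      = 16 * (5 + cos (2 * α * R)) * sin (α * R) ^ 2
          / (6 * Sf * (2 * α * R + sin (2 * α * R)) ^ 2) :=
  rod_variance_inner_product_general α R nf Sf hα hnf hsin φ0 φd V hφ0 hφd hV
end
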